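/- Let G and H be regular graphs with degrees d_G and d_H, x ∈ V(G), and y1y2 ∈ E(H) with R_{y1}(y1,y2) ≠ ∅. Then in G □ H, the maximum over all optimal assignments φ between R_{(x,y1)}((x,y1),(x,y2)) and R_{(x,y2)}((x,y1),(x,y2)) of the maximum displacement sup_z d(z, φ(z)) equals the corresponding quantity for optimal assignments between R_{y1}(y1,y2) and R_{y2}(y1,y2) in H. -/

import Mathlib

open SimpleGraph Filter Set

noncomputable section
attribute [local instance] Classical.propDecidable

variable {V α β : Type*}

/-- The strong product of two simple graphs. -/
def StrongProd (G : SimpleGraph α) (H : SimpleGraph β) : SimpleGraph (α × β) where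
  Adj p q := p ≠ q ∧ (p.1 = q.1 ∨ G.Adj p.1 q.1) ∧ (p.2 = q.2 ∨ H.Adj p.2 q.2)
  symm := by
    constructor
    rintro p q ⟨h1, h2, h3⟩
    exact ⟨h1.symm, h2.imp Eq.symm Adj.symm, h3.imp Eq.symm Adj.symm⟩
  loopless := ⟨fun p h => h.1 rfl⟩

/-- Closed neighborhood N[x]. -/
def closedNbr (G : SimpleGraph V) (x : V) : Set V := insert x (G.neighborSet x)

/-- The set R_x(x,y) = N(x) \ ((N(x) ∩ N(y)) ∪ {y}). -/
def Rside (G : SimpleGraph V) (x y : V) : Set V :=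
  G.neighborSet x \ ((G.neighborSet x ∩ G.neighborSet y) ∪ {y})

/-- Total transport cost of an assignment (bijection) between R_x(x,y) and R_y(x,y). -/
def cost (G : SimpleGraph V) (x y : V) (φ : Rside G x y ≃ Rside G y x) : ℝ :=
  ∑' z : Rside G x y, (G.dist z.1 (φ z).1 : ℝ)

/-- The optimal (minimal) total transport cost over all assignments. -/
def OPTc (G : SimpleGraph V) (x y : V) : ℝ :=
  sInf { c | ∃ φ : Rside G x y ≃ Rside G y x, c = cost G x y φ }

/-- An assignment is optimal if it attains the minimal total cost. -/
def IsOptimal (G : SimpleGraph V) (x y : V) (φ : Rside G x y ≃ Rside G y x) : Prop :=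
  cost G x y φ = OPTc G x y

/-- The largest displacement appearing in an optimal assignment, maximized over
optimal assignments. -/
def MAXc (G : SimpleGraph V) (x y : V) : ℝ :=
  sSup { m | ∃ φ : Rside G x y ≃ Rside G y x, IsOptimal G x y φ ∧
    m = ⨆ z : Rside G x y, (G.dist z.1 (φ z).1 : ℝ) }

/-- The measure μ_x^α. -/
def muMeas (G : SimpleGraph V) [G.LocallyFinite] (α : ℝ) (x : V) : V → ℝ :=
  fun z => if z = x then α else if G.Adj x z then (1 - α) / (G.degree x) else 0

/-- Wasserstein (optimal transport) distance between two measures with respect to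
the graph distance. -/
def Wass (G : SimpleGraph V) (μ ν : V → ℝ) : ℝ :=
  sInf { c | ∃ π : V → V → ℝ, (∀ u v, 0 ≤ π u v) ∧
    (∀ u, ∑' v, π u v = μ u) ∧ (∀ v, ∑' u, π u v = ν v) ∧
    c = ∑' u, ∑' v, (G.dist u v : ℝ) * π u v }

/-- The α-Ricci (Ollivier) curvature of an edge xy. -/
def kap (G : SimpleGraph V) [G.LocallyFinite] (α : ℝ) (x y : V) : ℝ :=
  1 - Wass G (muMeas G α x) (muMeas G α y)

/-- Ollivier Ricci curvature with idleness 0. -/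
def kap0 (G : SimpleGraph V) [G.LocallyFinite] (x y : V) : ℝ := kap G 0 x y

/-- `IsLLY G x y k` says that the Lin–Lu–Yau curvature of the edge xy exists and
equals k, i.e. κ_α(x,y)/(1-α) → k as α → 1⁻. -/
def IsLLY (G : SimpleGraph V) [G.LocallyFinite] (x y : V) (k : ℝ) : Prop :=
  Tendsto (fun α => kap G α x y / (1 - α)) (nhdsWithin 1 (Set.Iio 1)) (nhds k)


lemma mem_Rside {G : SimpleGraph V} {x y b : V} :
    b ∈ Rside G x y ↔ G.Adj x b ∧ ¬G.Adj y b ∧ b ≠ y := by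
  simp only [Rside, Set.mem_diff, Set.mem_union, Set.mem_inter_iff, SimpleGraph.mem_neighborSet,
    Set.mem_singleton_iff]
  tauto

section Hfacts
variable {H : SimpleGraph β} {y1 y2 : β}

lemma dist_R_two (hy : H.Adj y1 y2) {w : β} (hw : w ∈ Rside H y2 y1) : H.dist y1 w = 2 := by
  obtain ⟨h2w, h1w, hwy⟩ := mem_Rside.mp hw
  have hle : H.dist y1 w ≤ 2 := by
    simpa using SimpleGraph.dist_le (Walk.cons hy (Walk.cons h2w Walk.nil))
  have h0 : 0 < H.dist y1 w :=
    Reachable.pos_dist_of_ne ⟨Walk.cons hy (Walk.cons h2w Walk.nil)⟩ (Ne.symm hwy)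
  have h1 : H.dist y1 w ≠ 1 := fun h => h1w (SimpleGraph.dist_eq_one_iff_adj.mp h)
  omega

lemma dist_R_R (hy : H.Adj y1 y2) {z w : β} (hz : z ∈ Rside H y1 y2) (hw : w ∈ Rside H y2 y1) :
    1 ≤ H.dist z w ∧ H.dist z w ≤ 3 := by
  obtain ⟨h1z, h2z, hzy⟩ := mem_Rside.mp hz
  obtain ⟨h2w, h1w, hwy⟩ := mem_Rside.mp hw
  have hle : H.dist z w ≤ 3 := by
    simpa using SimpleGraph.dist_le (Walk.cons h1z.symm (Walk.cons hy (Walk.cons h2w Walk.nil)))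
  have hne : z ≠ w := fun h => h1w (h ▸ h1z)
  have h0 : 0 < H.dist z w :=
    Reachable.pos_dist_of_ne ⟨Walk.cons h1z.symm (Walk.cons hy (Walk.cons h2w Walk.nil))⟩ hne
  omega

lemma reach_R_left (hy : H.Adj y1 y2) {z : β} (hz : z ∈ Rside H y1 y2) : H.Reachable z y2 :=
  ((mem_Rside.mp hz).1.symm.reachable).trans hy.reachable

lemma reach_R_R (hy : H.Adj y1 y2) {z w : β} (hz : z ∈ Rside H y1 y2)
    (hw : w ∈ Rside H y2 y1) : H.Reachable z w :=
  (reach_R_left hy hz).trans (mem_Rside.mp hw).1.reachable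

end Hfacts

lemma reach_nbr {G : SimpleGraph α} {x a a' : α} (ha : G.Adj x a) (ha' : G.Adj x a') :
    G.Reachable a a' := (ha.symm.reachable).trans ha'.reachable

lemma mem_Rside_box {G : SimpleGraph α} {H : SimpleGraph β} {x : α} {y1 y2 : β}
    (hy : H.Adj y1 y2) {p : α × β} :
    p ∈ Rside (G.boxProd H) (x, y1) (x, y2) ↔
      (∃ a, G.Adj x a ∧ p = (a, y1)) ∨ (∃ z, z ∈ Rside H y1 y2 ∧ p = (x, z)) := by
  obtain ⟨a, b⟩ := p
  rw [mem_Rside]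
  simp only [SimpleGraph.boxProd_adj]
  constructor
  · rintro ⟨hadj, hn2, hne⟩
    rcases hadj with ⟨hxa, hb⟩ | ⟨hyb, hxa⟩
    · exact Or.inl ⟨a, hxa, by simp_all⟩
    · subst hxa
      refine Or.inr ⟨b, mem_Rside.mpr ⟨hyb, fun h2b => hn2 (Or.inr ⟨h2b, rfl⟩), ?_⟩, rfl⟩
      intro h; exact hne (by simp [h])
  · rintro (⟨a', hxa, heq⟩ | ⟨z, hz, heq⟩) <;>
      [ (rw [Prod.mk.injEq] at heq; obtain ⟨rfl, rfl⟩ := heq);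
        (rw [Prod.mk.injEq] at heq; obtain ⟨rfl, rfl⟩ := heq) ]
    · refine ⟨Or.inl ⟨hxa, rfl⟩, ?_, ?_⟩
      · rintro (⟨-, h⟩ | ⟨-, h⟩)
        · exact hy.ne' h
        · exact hxa.ne h
      · simp [hy.ne]
    · obtain ⟨h1z, h2z, hzy⟩ := mem_Rside.mp hz
      refine ⟨Or.inr ⟨h1z, rfl⟩, ?_, ?_⟩
      · rintro (⟨h, -⟩ | ⟨h, -⟩)
        · exact G.irrefl h
        · exact h2z h
      · simp [hzy]

lemma boxProd_walk_proj {G : SimpleGraph α} {H : SimpleGraph β}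
    {u v : α × β} (p : (G.boxProd H).Walk u v) :
    ∃ (q : G.Walk u.1 v.1) (r : H.Walk u.2 v.2), q.length + r.length ≤ p.length := by
  induction p with
  | nil => exact ⟨.nil, .nil, le_rfl⟩
  | @cons u w v h p ih =>
    obtain ⟨q, r, hqr⟩ := ih
    rw [SimpleGraph.boxProd_adj] at h
    rcases h with ⟨h1, h2⟩ | ⟨h1, h2⟩
    · refine ⟨q.cons h1, r.copy h2.symm rfl, ?_⟩
      simp only [SimpleGraph.Walk.length_cons, SimpleGraph.Walk.length_copy]
      omega
    · refine ⟨q.copy h2.symm rfl, r.cons h1, ?_⟩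
      simp only [SimpleGraph.Walk.length_cons, SimpleGraph.Walk.length_copy]
      omega

lemma boxProd_dist {G : SimpleGraph α} {H : SimpleGraph β}
    {a c : α} {b d : β} (hg : G.Reachable a c) (hh : H.Reachable b d) :
    (G.boxProd H).dist (a, b) (c, d) = G.dist a c + H.dist b d := by
  obtain ⟨q, hq⟩ := hg.exists_walk_length_eq_dist
  obtain ⟨r, hr⟩ := hh.exists_walk_length_eq_dist
  have hw : ((q.boxProdLeft H b).append (r.boxProdRight G c)).length
      = G.dist a c + H.dist b d := by
    rw [SimpleGraph.Walk.length_append]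
    simp only [SimpleGraph.Walk.boxProdLeft, SimpleGraph.Walk.boxProdRight,
      SimpleGraph.Walk.length_map]
    have l1 : (q.boxProdLeft H b).length = q.length := SimpleGraph.Walk.length_map ..
    have l2 : (r.boxProdRight G c).length = r.length := SimpleGraph.Walk.length_map ..
    rw [← hq, ← hr]
    exact congrArg₂ (· + ·) l1 l2
  apply le_antisymm
  · exact hw ▸ SimpleGraph.dist_le _
  · have hreach : (G.boxProd H).Reachable (a, b) (c, d) := ⟨(q.boxProdLeft H b).append (r.boxProdRight G c)⟩
    obtain ⟨p, hp⟩ := hreach.exists_walk_length_eq_dist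
    obtain ⟨q', r', hqr⟩ := boxProd_walk_proj p
    have h1 : G.dist a c ≤ q'.length := SimpleGraph.dist_le q'
    have h2 : H.dist b d ≤ r'.length := SimpleGraph.dist_le r'
    omega

section Main
variable {G : SimpleGraph α} {H : SimpleGraph β} {x : α} {y1 y2 : β}

/-- The identification of the box-product side set with a sum. -/
def eSide (G : SimpleGraph α) (H : SimpleGraph β) (x : α) (y1 y2 : β) (hy : H.Adj y1 y2) :
    (↥(G.neighborSet x) ⊕ ↥(Rside H y1 y2)) ≃ ↥(Rside (G.boxProd H) (x, y1) (x, y2)) :=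
  Equiv.ofBijective
    (fun i => match i with
      | .inl a => ⟨(a.1, y1), (mem_Rside_box hy).mpr (Or.inl ⟨a.1, a.2, rfl⟩)⟩
      | .inr z => ⟨(x, z.1), (mem_Rside_box hy).mpr (Or.inr ⟨z.1, z.2, rfl⟩)⟩)
    (by
      constructor
      · rintro (a | z) (a' | z') h <;>
          simp only [Subtype.mk.injEq, Prod.mk.injEq] at h
        · exact congrArg Sum.inl (Subtype.ext h.1)
        · exact absurd (h.2.symm ▸ z'.2) (fun hz => H.irrefl (mem_Rside.mp hz).1)
        · exact absurd (h.2 ▸ z.2) (fun hz => H.irrefl (mem_Rside.mp hz).1)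
        · exact congrArg Sum.inr (Subtype.ext h.2)
      · rintro ⟨p, hp⟩
        rcases (mem_Rside_box hy).mp hp with ⟨a, ha, rfl⟩ | ⟨z, hz, rfl⟩
        · exact ⟨.inl ⟨a, ha⟩, rfl⟩
        · exact ⟨.inr ⟨z, hz⟩, rfl⟩)

@[simp] lemma eSide_inl (hy : H.Adj y1 y2) (a : ↥(G.neighborSet x)) :
    ((eSide G H x y1 y2 hy) (.inl a)).1 = (a.1, y1) := rfl

@[simp] lemma eSide_inr (hy : H.Adj y1 y2) (z : ↥(Rside H y1 y2)) :
    ((eSide G H x y1 y2 hy) (.inr z)).1 = (x, z.1) := rfl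

/-- The cost matrix on the sum decomposition. -/
def Dc (G : SimpleGraph α) (H : SimpleGraph β) (x : α) (y1 y2 : β) :
    (↥(G.neighborSet x) ⊕ ↥(Rside H y1 y2)) → (↥(G.neighborSet x) ⊕ ↥(Rside H y2 y1)) → ℝ
  | .inl a, .inl a' => (G.dist a.1 a'.1 : ℝ) + 1
  | .inl _, .inr _ => 3
  | .inr _, .inl _ => 3
  | .inr z, .inr w => (H.dist z.1 w.1 : ℝ)

lemma dist_eSide (hy : H.Adj y1 y2) (i : ↥(G.neighborSet x) ⊕ ↥(Rside H y1 y2))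
    (j : ↥(G.neighborSet x) ⊕ ↥(Rside H y2 y1)) :
    (((G.boxProd H).dist ((eSide G H x y1 y2 hy) i).1
      ((eSide G H x y2 y1 hy.symm) j).1 : ℕ) : ℝ) = Dc G H x y1 y2 i j := by
  rcases i with a | z <;> rcases j with a' | w
  · show (((G.boxProd H).dist (a.1, y1) (a'.1, y2) : ℕ) : ℝ) = _
    rw [boxProd_dist (reach_nbr a.2 a'.2) hy.reachable,
      SimpleGraph.dist_eq_one_iff_adj.mpr hy]
    push_cast
    rfl
  · show (((G.boxProd H).dist (a.1, y1) (x, w.1) : ℕ) : ℝ) = _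
    rw [boxProd_dist (a.2.symm.reachable) ⟨Walk.cons hy (Walk.cons (mem_Rside.mp w.2).1 Walk.nil)⟩,
      SimpleGraph.dist_eq_one_iff_adj.mpr a.2.symm, dist_R_two hy w.2]
    norm_num
    rfl
  · show (((G.boxProd H).dist (x, z.1) (a'.1, y2) : ℕ) : ℝ) = _
    rw [boxProd_dist (a'.2.reachable) (reach_R_left hy z.2),
      SimpleGraph.dist_eq_one_iff_adj.mpr a'.2]
    have : H.dist z.1 y2 = 2 := by
      rw [SimpleGraph.dist_comm]
      exact dist_R_two hy.symm z.2
    rw [this]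
    norm_num
    rfl
  · show (((G.boxProd H).dist (x, z.1) (x, w.1) : ℕ) : ℝ) = _
    rw [boxProd_dist (Reachable.refl x) (reach_R_R hy z.2 w.2), SimpleGraph.dist_self]
    simp [Dc]

end Main

lemma card_Rside [Fintype β] {H : SimpleGraph β} {dH : ℕ}
    (hH : H.IsRegularOfDegree dH) {y1 y2 : β} (hy : H.Adj y1 y2) :
    Fintype.card ↥(Rside H y1 y2) = Fintype.card ↥(Rside H y2 y1) := by
  classical
  have key : ∀ a b : β, H.Adj a b →
      Fintype.card ↥(Rside H a b) = dH - ((H.neighborFinset a ∩ H.neighborFinset b).card + 1) := by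
    intro a b hab
    rw [← Set.toFinset_card]
    have hset : (Rside H a b).toFinset
        = H.neighborFinset a \ ((H.neighborFinset a ∩ H.neighborFinset b) ∪ {b}) := by
      ext c
      rw [Set.mem_toFinset]
      simp [Rside, SimpleGraph.mem_neighborFinset]
    rw [hset, Finset.card_sdiff_of_subset]
    · rw [Finset.card_union_of_disjoint, Finset.card_singleton]
      · have : (H.neighborFinset a).card = dH := hH a
        rw [this]
      · rw [Finset.disjoint_singleton_right, Finset.mem_inter]
        exact fun h => H.irrefl ((H.mem_neighborFinset b b).mp h.2)
    · refine Finset.union_subset Finset.inter_subset_left ?_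
      rw [Finset.singleton_subset_iff, SimpleGraph.mem_neighborFinset]
      exact hab
  rw [key y1 y2 hy, key y2 y1 hy.symm, Finset.inter_comm]

lemma sum_equiv_extension {A B C : Type*} [Fintype A] [Fintype B] [Fintype C]
    (hcard : Fintype.card B = Fintype.card C) (Ψ : A ⊕ B ≃ A ⊕ C) :
    ∃ ψ : B ≃ C, ∀ (b : B) (c : C), Ψ (Sum.inr b) = Sum.inr c → ψ b = c := by
  classical
  set p : B → Prop := fun b => (Ψ (Sum.inr b)).isRight with hp
  set q : C → Prop := fun c => (Ψ.symm (Sum.inr c)).isRight with hq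
  have hθf : ∀ b : {b // p b}, q ((Ψ (Sum.inr b.1)).getRight b.2) := by
    intro b
    show (Ψ.symm (Sum.inr _)).isRight
    rw [Sum.inr_getRight, Equiv.symm_apply_apply]
    rfl
  have hθg : ∀ c : {c // q c}, p ((Ψ.symm (Sum.inr c.1)).getRight c.2) := by
    intro c
    show (Ψ (Sum.inr _)).isRight
    rw [Sum.inr_getRight, Equiv.apply_symm_apply]
    rfl
  let θe : {b // p b} ≃ {c // q c} :=
    { toFun := fun b => ⟨(Ψ (Sum.inr b.1)).getRight b.2, hθf b⟩
      invFun := fun c => ⟨(Ψ.symm (Sum.inr c.1)).getRight c.2, hθg c⟩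
      left_inv := by
        rintro ⟨b, hb⟩
        apply Subtype.ext
        apply Sum.inr_injective
        rw [Sum.inr_getRight, Sum.inr_getRight, Equiv.symm_apply_apply]
      right_inv := by
        rintro ⟨c, hc⟩
        apply Subtype.ext
        apply Sum.inr_injective
        rw [Sum.inr_getRight, Sum.inr_getRight, Equiv.apply_symm_apply] }
  have hcc : Fintype.card {b // ¬p b} = Fintype.card {c // ¬q c} := by
    rw [Fintype.card_subtype_compl, Fintype.card_subtype_compl, hcard,
      Fintype.card_congr θe]
  let θc : {b // ¬p b} ≃ {c // ¬q c} := Fintype.equivOfCardEq hcc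
  refine ⟨(Equiv.sumCompl p).symm.trans ((Equiv.sumCongr θe θc).trans (Equiv.sumCompl q)), ?_⟩
  intro b c h
  have hb : p b := by rw [hp]; simp [h]
  simp only [Equiv.trans_apply, Equiv.sumCompl_symm_apply_of_pos hb,
    Equiv.sumCongr_apply, Sum.map_inl, Equiv.sumCompl_apply_inl]
  show (Ψ (Sum.inr b)).getRight hb = c
  apply Sum.inr_injective
  rw [Sum.inr_getRight, h]

lemma iSup_sum_eq {A B : Type*} [Finite A] [Finite B] [Nonempty B]
    (f : A ⊕ B → ℝ) (hA : ∀ a, f (Sum.inl a) = 1) (hB : ∀ b, 1 ≤ f (Sum.inr b)) :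
    (⨆ i, f i) = ⨆ b, f (Sum.inr b) := by
  haveI : Nonempty (A ⊕ B) := ⟨Sum.inr (Classical.arbitrary B)⟩
  have bdd : BddAbove (Set.range f) := Set.Finite.bddAbove (Set.finite_range f)
  have bddB : BddAbove (Set.range fun b => f (Sum.inr b)) :=
    Set.Finite.bddAbove (Set.finite_range _)
  apply le_antisymm
  · refine ciSup_le fun i => ?_
    cases i with
    | inl a =>
      rw [hA]
      exact le_trans (hB (Classical.arbitrary B)) (le_ciSup bddB (Classical.arbitrary B))
    | inr b => exact le_ciSup bddB b
  · exact ciSup_le fun b => le_ciSup bdd (Sum.inr b)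

section CostLemmas
variable [Fintype V] (G : SimpleGraph V) (x y : V)

lemma cost_eq_sum (φ : Rside G x y ≃ Rside G y x) :
    cost G x y φ = ∑ z : Rside G x y, (G.dist z.1 (φ z).1 : ℝ) := tsum_fintype _

lemma cost_nonneg (φ : Rside G x y ≃ Rside G y x) : 0 ≤ cost G x y φ := by
  rw [cost_eq_sum]
  exact Finset.sum_nonneg fun z _ => Nat.cast_nonneg _

lemma bddBelow_costset : BddBelow { c | ∃ φ : Rside G x y ≃ Rside G y x, c = cost G x y φ } := by
  refine ⟨0, ?_⟩
  rintro c ⟨φ, rfl⟩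
  exact cost_nonneg G x y φ

lemma OPTc_le (φ : Rside G x y ≃ Rside G y x) : OPTc G x y ≤ cost G x y φ :=
  csInf_le (bddBelow_costset G x y) ⟨φ, rfl⟩

lemma exists_optimal (hne : Nonempty (↥(Rside G x y) ≃ ↥(Rside G y x))) :
    ∃ φ, IsOptimal G x y φ := by
  obtain ⟨φ1⟩ := hne
  have hset : { c | ∃ φ : Rside G x y ≃ Rside G y x, c = cost G x y φ }
      = Set.range (cost G x y) := by
    ext c
    simp [Set.mem_range, eq_comm]
  have hfin : { c | ∃ φ : Rside G x y ≃ Rside G y x, c = cost G x y φ }.Finite := by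
    rw [hset]; exact Set.finite_range _
  have hnonempty : { c | ∃ φ : Rside G x y ≃ Rside G y x, c = cost G x y φ }.Nonempty :=
    ⟨cost G x y φ1, φ1, rfl⟩
  obtain ⟨φ, hφ⟩ := hnonempty.csInf_mem hfin
  exact ⟨φ, hφ.symm⟩

end CostLemmas
theorem max_boxProd [Fintype α] [Fintype β] (G : SimpleGraph α) (H : SimpleGraph β)
    (dG dH : ℕ) (hG : G.IsRegularOfDegree dG) (hH : H.IsRegularOfDegree dH)
    (x : α) (y1 y2 : β) (hy : H.Adj y1 y2) (hR : (Rside H y1 y2).Nonempty) :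
    MAXc (G.boxProd H) (x, y1) (x, y2) = MAXc H y1 y2 := by
  classical
  haveI : Nonempty ↥(Rside H y1 y2) := hR.to_subtype
  have hcard := card_Rside hH hy
  haveI hne_psi : Nonempty (↥(Rside H y1 y2) ≃ ↥(Rside H y2 y1)) :=
    ⟨Fintype.equivOfCardEq hcard⟩
  set P := G.boxProd H with hP
  set e1 := eSide G H x y1 y2 hy with he1
  set e2 := eSide G H x y2 y1 hy.symm with he2
  set D := Dc G H x y1 y2 with hD
  -- cost of a box assignment in terms of D
  have costφ : ∀ φ : ↥(Rside P (x, y1) (x, y2)) ≃ ↥(Rside P (x, y2) (x, y1)),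
      cost P (x, y1) (x, y2) φ = ∑ i, D i ((e1.trans (φ.trans e2.symm)) i) := by
    intro φ
    rw [cost_eq_sum, ← Equiv.sum_comp e1 (fun z => ((P.dist z.1 (φ z).1 : ℕ) : ℝ))]
    refine Finset.sum_congr rfl fun i _ => ?_
    have hφe : φ (e1 i) = e2 ((e1.trans (φ.trans e2.symm)) i) := by simp
    rw [hφe]
    exact dist_eSide hy i _
  have costψ : ∀ ψ : ↥(Rside H y1 y2) ≃ ↥(Rside H y2 y1),
      cost H y1 y2 ψ = ∑ z : ↥(Rside H y1 y2), ((H.dist z.1 (ψ z).1 : ℕ) : ℝ) :=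
    fun ψ => cost_eq_sum H y1 y2 ψ
  have dG_card : Fintype.card ↥(G.neighborSet x) = dG := by
    rw [G.card_neighborSet_eq_degree x]; exact hG x
  have hDge1 : ∀ (a : ↥(G.neighborSet x)) (j), (1 : ℝ) ≤ D (.inl a) j := by
    rintro a (a' | w)
    · simp only [hD, Dc]
      have : (0:ℝ) ≤ (G.dist a.1 a'.1 : ℕ) := Nat.cast_nonneg _
      linarith
    · norm_num [hD, Dc]
  -- the key lower bound on the R-part of the sum
  have L_R : ∀ Ψ : (↥(G.neighborSet x) ⊕ ↥(Rside H y1 y2)) ≃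
        (↥(G.neighborSet x) ⊕ ↥(Rside H y2 y1)),
      OPTc H y1 y2 ≤ ∑ z : ↥(Rside H y1 y2), D (.inr z) (Ψ (.inr z)) := by
    intro Ψ
    obtain ⟨ψ', hψ'⟩ := sum_equiv_extension hcard Ψ
    refine le_trans (OPTc_le H y1 y2 ψ') ?_
    rw [costψ ψ']
    refine Finset.sum_le_sum fun z _ => ?_
    rcases hj : Ψ (.inr z) with a | w
    · have h3 := (dist_R_R hy z.2 (ψ' z).2).2
      simp only [hD, Dc]
      exact_mod_cast h3
    · rw [hψ' z w hj]
      simp [hD, Dc]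
  have L_A : ∀ Ψ : (↥(G.neighborSet x) ⊕ ↥(Rside H y1 y2)) ≃
        (↥(G.neighborSet x) ⊕ ↥(Rside H y2 y1)),
      (dG : ℝ) ≤ ∑ a : ↥(G.neighborSet x), D (.inl a) (Ψ (.inl a)) := by
    intro Ψ
    calc (dG : ℝ) = ∑ _a : ↥(G.neighborSet x), (1 : ℝ) := by
          rw [Finset.sum_const, Finset.card_univ, dG_card]; simp
      _ ≤ _ := Finset.sum_le_sum fun a _ => hDge1 a _
  have L_A' : ∀ Ψ : (↥(G.neighborSet x) ⊕ ↥(Rside H y1 y2)) ≃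
        (↥(G.neighborSet x) ⊕ ↥(Rside H y2 y1)),
      (∃ a w, Ψ (.inl a) = .inr w) →
      (dG : ℝ) + 2 ≤ ∑ a : ↥(G.neighborSet x), D (.inl a) (Ψ (.inl a)) := by
    rintro Ψ ⟨a0, w0, ha0⟩
    have h3 : D (.inl a0) (Ψ (.inl a0)) = 3 := by rw [ha0]; rfl
    have hdG1 : 1 ≤ dG := by
      rw [← dG_card]
      exact Fintype.card_pos_iff.mpr ⟨a0⟩
    rw [← Finset.add_sum_erase _ _ (Finset.mem_univ a0), h3]
    have herase : ((dG : ℝ) - 1)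
        ≤ ∑ a ∈ Finset.univ.erase a0, D (.inl a) (Ψ (.inl a)) := by
      have hcarderase : (Finset.univ.erase a0).card = dG - 1 := by
        rw [Finset.card_erase_of_mem (Finset.mem_univ a0), Finset.card_univ, dG_card]
      calc ((dG : ℝ) - 1) = ((dG - 1 : ℕ) : ℝ) := by
            rw [Nat.cast_sub hdG1]; norm_num
        _ = (Finset.univ.erase a0).card • (1 : ℝ) := by rw [hcarderase]; simp
        _ ≤ _ := Finset.card_nsmul_le_sum _ _ _ (fun a _ => hDge1 a _)
    linarith
  have split : ∀ Ψ : (↥(G.neighborSet x) ⊕ ↥(Rside H y1 y2)) ≃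
        (↥(G.neighborSet x) ⊕ ↥(Rside H y2 y1)),
      ∑ i, D i (Ψ i) = ∑ a : ↥(G.neighborSet x), D (.inl a) (Ψ (.inl a))
        + ∑ z : ↥(Rside H y1 y2), D (.inr z) (Ψ (.inr z)) :=
    fun Ψ => Fintype.sum_sum_type _
  -- D on diagonal-ish inl pairs
  have hDinl : ∀ a a' : ↥(G.neighborSet x), D (.inl a) (.inl a') = (G.dist a.1 a'.1 : ℕ) + 1 :=
    fun a a' => rfl
  have hDinr : ∀ (z : ↥(Rside H y1 y2)) (w : ↥(Rside H y2 y1)),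
      D (.inr z) (.inr w) = ((H.dist z.1 w.1 : ℕ) : ℝ) := fun z w => rfl
  obtain ⟨ψ0, hψ0⟩ := exists_optimal H y1 y2 hne_psi
  -- value of the box optimum
  have hcost0 : ∀ ψ : ↥(Rside H y1 y2) ≃ ↥(Rside H y2 y1),
      cost P (x, y1) (x, y2) (e1.symm.trans (((Equiv.refl _).sumCongr ψ).trans e2))
        = dG + cost H y1 y2 ψ := by
    intro ψ
    have hid : e1.trans ((e1.symm.trans (((Equiv.refl _).sumCongr ψ).trans e2)).trans e2.symm)
        = (Equiv.refl _).sumCongr ψ := by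
      ext i : 1
      simp
    rw [costφ, hid, split]
    have h1 : ∑ a : ↥(G.neighborSet x),
        D (.inl a) (((Equiv.refl _).sumCongr ψ) (.inl a)) = (dG : ℝ) := by
      have : ∀ a : ↥(G.neighborSet x),
          D (.inl a) (((Equiv.refl _).sumCongr ψ) (.inl a)) = 1 := by
        intro a
        rw [Equiv.sumCongr_apply, Sum.map_inl, hDinl, Equiv.refl_apply,
          SimpleGraph.dist_self]
        norm_num
      rw [Finset.sum_congr rfl fun a _ => this a, Finset.sum_const, Finset.card_univ,
        dG_card]
      simp
    have h2 : ∑ z : ↥(Rside H y1 y2),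
        D (.inr z) (((Equiv.refl _).sumCongr ψ) (.inr z)) = cost H y1 y2 ψ := by
      rw [costψ]
      exact Finset.sum_congr rfl fun z _ => by
        rw [Equiv.sumCongr_apply, Sum.map_inr, hDinr]
    rw [h1, h2]
  have OPTbox : OPTc P (x, y1) (x, y2) = dG + OPTc H y1 y2 := by
    apply le_antisymm
    · calc OPTc P (x, y1) (x, y2)
          ≤ cost P (x, y1) (x, y2) (e1.symm.trans (((Equiv.refl _).sumCongr ψ0).trans e2)) :=
            OPTc_le _ _ _ _
        _ = dG + cost H y1 y2 ψ0 := hcost0 ψ0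
        _ = dG + OPTc H y1 y2 := by rw [hψ0]
    · refine le_csInf ⟨_, e1.symm.trans (((Equiv.refl _).sumCongr ψ0).trans e2), rfl⟩ ?_
      rintro c ⟨φ, rfl⟩
      have h1 := L_A (e1.trans (φ.trans e2.symm))
      have h2 := L_R (e1.trans (φ.trans e2.symm))
      rw [costφ φ, split]
      linarith
  -- transport of iSup along e1
  have supφ : ∀ φ : ↥(Rside P (x, y1) (x, y2)) ≃ ↥(Rside P (x, y2) (x, y1)),
      (⨆ z : ↥(Rside P (x, y1) (x, y2)), ((P.dist z.1 (φ z).1 : ℕ) : ℝ))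
        = ⨆ i, D i ((e1.trans (φ.trans e2.symm)) i) := by
    intro φ
    have h1 : (⨆ z : ↥(Rside P (x, y1) (x, y2)), ((P.dist z.1 (φ z).1 : ℕ) : ℝ))
        = ⨆ i, ((P.dist (e1 i).1 (φ (e1 i)).1 : ℕ) : ℝ) := by
      rw [iSup, iSup]
      congr 1
      exact (e1.surjective.range_comp fun z => ((P.dist z.1 (φ z).1 : ℕ) : ℝ)).symm
    rw [h1]
    refine iSup_congr fun i => ?_
    have hφe : φ (e1 i) = e2 ((e1.trans (φ.trans e2.symm)) i) := by simp
    rw [hφe]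
    exact dist_eSide hy i _
  -- box-optimal assignments give H-optimal ones with the same displacement sup
  have dirBox : ∀ φ : ↥(Rside P (x, y1) (x, y2)) ≃ ↥(Rside P (x, y2) (x, y1)),
      IsOptimal P (x, y1) (x, y2) φ →
      ∃ ψ : ↥(Rside H y1 y2) ≃ ↥(Rside H y2 y1), IsOptimal H y1 y2 ψ ∧
        (⨆ z : ↥(Rside P (x, y1) (x, y2)), ((P.dist z.1 (φ z).1 : ℕ) : ℝ))
          = ⨆ z : ↥(Rside H y1 y2), ((H.dist z.1 (ψ z).1 : ℕ) : ℝ) := by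
    intro φ hφ
    set Ψ := e1.trans (φ.trans e2.symm) with hΨdef
    have hcost : ∑ a : ↥(G.neighborSet x), D (.inl a) (Ψ (.inl a))
        + ∑ z : ↥(Rside H y1 y2), D (.inr z) (Ψ (.inr z)) = dG + OPTc H y1 y2 := by
      rw [← split, ← costφ φ, hφ, OPTbox]
    have hk1 : ∀ a, (Ψ (Sum.inl a)).isLeft := by
      by_contra h
      push_neg at h
      obtain ⟨a0, ha0⟩ := h
      obtain ⟨w0, hw0⟩ : ∃ w0, Ψ (Sum.inl a0) = Sum.inr w0 := by
        rcases hj : Ψ (Sum.inl a0) with a | w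
        · exact absurd (by rw [hj]; rfl) ha0
        · exact ⟨w, rfl⟩
      have hA' := L_A' Ψ ⟨a0, w0, hw0⟩
      have hRR := L_R Ψ
      linarith
    set t : ↥(G.neighborSet x) → ↥(G.neighborSet x) :=
      fun a => (Ψ (Sum.inl a)).getLeft (hk1 a) with ht
    have hΨinl : ∀ a, Ψ (Sum.inl a) = Sum.inl (t a) :=
      fun a => (Sum.inl_getLeft _ (hk1 a)).symm
    have hti : Function.Injective t := by
      intro a b hab
      have : Ψ (Sum.inl a) = Ψ (Sum.inl b) := by rw [hΨinl a, hΨinl b, hab]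
      exact Sum.inl_injective (Ψ.injective this)
    have hts : Function.Surjective t := Finite.surjective_of_injective hti
    have hk2 : ∀ z, (Ψ (Sum.inr z)).isRight := by
      intro z
      rcases hj : Ψ (Sum.inr z) with a' | w
      · obtain ⟨a, rfl⟩ := hts a'
        have : Ψ (Sum.inl a) = Ψ (Sum.inr z) := by rw [hΨinl a, hj]
        simpa using Ψ.injective this
      · rfl
    have hψbij : Function.Bijective (fun z => (Ψ (Sum.inr z)).getRight (hk2 z)) := by
      constructor
      · intro z z' hzz
        have h2 : (Sum.inr ((Ψ (Sum.inr z)).getRight (hk2 z)) :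
            ↥(G.neighborSet x) ⊕ ↥(Rside H y2 y1))
            = Sum.inr ((Ψ (Sum.inr z')).getRight (hk2 z')) := congrArg Sum.inr hzz
        rw [Sum.inr_getRight, Sum.inr_getRight] at h2
        exact Sum.inr_injective (Ψ.injective h2)
      · intro w
        rcases hj : Ψ.symm (Sum.inr w) with a | z
        · exfalso
          have : Ψ (Sum.inl a) = Sum.inr w := by rw [← hj, Equiv.apply_symm_apply]
          have := hk1 a
          rw [‹Ψ (Sum.inl a) = Sum.inr w›] at this
          simp at this
        · refine ⟨z, ?_⟩
          have hzw : Ψ (Sum.inr z) = Sum.inr w := by rw [← hj, Equiv.apply_symm_apply]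
          apply Sum.inr_injective
          rw [Sum.inr_getRight, hzw]
    set ψ := Equiv.ofBijective _ hψbij with hψdef
    have hΨinr : ∀ z, Ψ (Sum.inr z) = Sum.inr (ψ z) :=
      fun z => (Sum.inr_getRight _ (hk2 z)).symm
    -- refine the cost identity
    have hsumA : ∑ a : ↥(G.neighborSet x), D (.inl a) (Ψ (.inl a))
        = (∑ a : ↥(G.neighborSet x), ((G.dist a.1 (t a).1 : ℕ) : ℝ)) + dG := by
      have : ∀ a : ↥(G.neighborSet x), D (.inl a) (Ψ (.inl a))
          = ((G.dist a.1 (t a).1 : ℕ) : ℝ) + 1 := by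
        intro a
        rw [hΨinl a, hDinl]
      rw [Finset.sum_congr rfl fun a _ => this a, Finset.sum_add_distrib,
        Finset.sum_const, Finset.card_univ, dG_card]
      simp
    have hsumR : ∑ z : ↥(Rside H y1 y2), D (.inr z) (Ψ (.inr z)) = cost H y1 y2 ψ := by
      rw [costψ]
      exact Finset.sum_congr rfl fun z _ => by rw [hΨinr z, hDinr]
    have hOle := OPTc_le H y1 y2 ψ
    have hdnn : 0 ≤ ∑ a : ↥(G.neighborSet x), ((G.dist a.1 (t a).1 : ℕ) : ℝ) :=
      Finset.sum_nonneg fun a _ => Nat.cast_nonneg _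
    have hcψ : cost H y1 y2 ψ = OPTc H y1 y2 := by
      rw [hsumA, hsumR] at hcost
      linarith
    have hdist0 : ∀ a : ↥(G.neighborSet x), ((G.dist a.1 (t a).1 : ℕ) : ℝ) = 0 := by
      have hzero : ∑ a : ↥(G.neighborSet x), ((G.dist a.1 (t a).1 : ℕ) : ℝ) = 0 := by
        rw [hsumA, hsumR] at hcost
        linarith
      intro a
      have := (Finset.sum_eq_zero_iff_of_nonneg
        (fun a _ => Nat.cast_nonneg (G.dist a.1 (t a).1))).mp hzero a (Finset.mem_univ a)
      exact this
    refine ⟨ψ, hcψ, ?_⟩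
    rw [supφ φ, ← hΨdef]
    have hsupeq : (⨆ i, D i (Ψ i)) = ⨆ z : ↥(Rside H y1 y2), D (.inr z) (Ψ (.inr z)) := by
      refine iSup_sum_eq _ ?_ ?_
      · intro a
        rw [hΨinl a, hDinl, hdist0 a]
        norm_num
      · intro z
        rw [hΨinr z, hDinr]
        exact_mod_cast (dist_R_R hy z.2 (ψ z).2).1
    rw [hsupeq]
    exact iSup_congr fun z => by rw [hΨinr z, hDinr]
  -- H-optimal assignments give box-optimal ones with the same displacement sup
  have dirH : ∀ ψ : ↥(Rside H y1 y2) ≃ ↥(Rside H y2 y1), IsOptimal H y1 y2 ψ →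
      ∃ φ : ↥(Rside P (x, y1) (x, y2)) ≃ ↥(Rside P (x, y2) (x, y1)),
        IsOptimal P (x, y1) (x, y2) φ ∧
        (⨆ z : ↥(Rside P (x, y1) (x, y2)), ((P.dist z.1 (φ z).1 : ℕ) : ℝ))
          = ⨆ z : ↥(Rside H y1 y2), ((H.dist z.1 (ψ z).1 : ℕ) : ℝ) := by
    intro ψ hψ
    refine ⟨e1.symm.trans (((Equiv.refl _).sumCongr ψ).trans e2), ?_, ?_⟩
    · show cost P (x, y1) (x, y2) _ = _
      rw [hcost0 ψ, hψ, OPTbox]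
    · have hid : e1.trans ((e1.symm.trans (((Equiv.refl _).sumCongr ψ).trans e2)).trans e2.symm)
          = (Equiv.refl _).sumCongr ψ := by
        ext i : 1
        simp
      rw [supφ, hid]
      have hsupeq : (⨆ i, D i (((Equiv.refl _).sumCongr ψ) i))
          = ⨆ z : ↥(Rside H y1 y2), D (.inr z) (((Equiv.refl _).sumCongr ψ) (.inr z)) := by
        refine iSup_sum_eq _ ?_ ?_
        · intro a
          rw [Equiv.sumCongr_apply, Sum.map_inl, hDinl, Equiv.refl_apply,
            SimpleGraph.dist_self]
          norm_num
        · intro z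
          rw [Equiv.sumCongr_apply, Sum.map_inr, hDinr]
          exact_mod_cast (dist_R_R hy z.2 (ψ z).2).1
      rw [hsupeq]
      exact iSup_congr fun z => by rw [Equiv.sumCongr_apply, Sum.map_inr, hDinr]
  -- conclude: the two sets of attained maxima coincide
  unfold MAXc
  congr 1
  ext m
  constructor
  · rintro ⟨φ, hopt, rfl⟩
    obtain ⟨ψ, hψopt, hsup⟩ := dirBox φ hopt
    exact ⟨ψ, hψopt, hsup⟩
  · rintro ⟨ψ, hopt, rfl⟩
    obtain ⟨φ, hφopt, hsup⟩ := dirH ψ hopt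
    exact ⟨φ, hφopt, hsup.symm⟩
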